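/- Let $\mu$ be an ergodic invariant probability measure for a Markov process $\Phi$ on a Polish space $\mathcal{X}$, and let $f$ be a measurable real-valued function. Suppose there exists a Borel set $\bar{\mathcal{X}}$ with $\mu(\bar{\mathcal{X}}) > 0$ such that $\sup_{t\ge 0}\mathbb{E}^x|f(\Phi_t)| < \infty$ for all $x\in\bar{\mathcal{X}}$. Then $f \in L^1(\mu)$. -/

import Mathlib

/-!
Since `t ↦ P t` carries no measurability, time averages are replaced by a convexity argument in
`L²(μ)`, where invariance of `μ` and Jensen make each `T t v = ∫ v dP_t(·)` a contraction. For a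
truncation `g` of `|f|`, the element `h` of least norm in the closed convex hull of the orbit
`{T t g}` is fixed by every `T t`, because `T t` maps the hull into itself without increasing
norms. A fixed point is constant along transitions (`h ∘ fst - h ∘ snd` has norm zero in
`L²(μ ⊗ P t)`), so ergodicity makes `h` a.e. equal to a constant `c`. Integrating over the whole
space and over a set `B` of positive measure on which `sup_t T t |f| ≤ m` are continuous
functionals, whence `∫ g dμ = c ≤ m` for every truncation; monotone convergence concludes.
-/
open MeasureTheory Filter Set ProbabilityTheory
open scoped ENNReal NNReal

section MinimalNorm

variable {F : Type*} [NormedAddCommGroup F] [InnerProductSpace ℝ F] {K : Set F}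

lemma Convex.eq_of_norm_le_of_forall_norm_le (hK : Convex ℝ K) {h w : F} (hh : h ∈ K)
    (hw : w ∈ K) (hmin : ∀ v ∈ K, ‖h‖ ≤ ‖v‖) (hwh : ‖w‖ ≤ ‖h‖) : w = h := by
  have hmid := hmin _ (hK.midpoint_mem hh hw)
  rw [midpoint_eq_smul_add, norm_smul, invOf_eq_inv, Real.norm_of_nonneg (by norm_num)] at hmid
  have hpar := parallelogram_law_with_norm ℝ h w
  have hsq : ‖h - w‖ ^ 2 ≤ 0 := by
    nlinarith [norm_nonneg h, norm_nonneg w, norm_nonneg (h + w), norm_nonneg (h - w)]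
  rw [eq_comm, ← sub_eq_zero, ← norm_eq_zero]
  exact pow_eq_zero_iff two_ne_zero |>.1 (le_antisymm hsq (sq_nonneg _))

lemma IsClosed.exists_isFixedPt_of_norm_le [CompleteSpace F] (hK : IsClosed K)
    (hconv : Convex ℝ K) (hne : K.Nonempty) {ι : Type*} {T : ι → F → F}
    (hT : ∀ i, MapsTo (T i) K K) (hnorm : ∀ i v, ‖T i v‖ ≤ ‖v‖) :
    ∃ h ∈ K, ∀ i, Function.IsFixedPt (T i) h := by
  obtain ⟨h, hh, hmin⟩ := exists_norm_eq_iInf_of_complete_convex hne hK.isComplete hconv 0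
  simp only [zero_sub, norm_neg] at hmin
  have hmin' : ∀ v ∈ K, ‖h‖ ≤ ‖v‖ := fun v hv ↦
    hmin ▸ ciInf_le ⟨0, forall_mem_range.2 fun w : K ↦ norm_nonneg (w : F)⟩ (⟨v, hv⟩ : K)
  exact ⟨h, hh, fun i ↦ hconv.eq_of_norm_le_of_forall_norm_le hh (hT i hh) hmin' (hnorm i h)⟩

lemma ContinuousLinearMap.mapsTo_closure_convexHull {G : Type*} [AddCommGroup G] [Module ℝ G]
    [TopologicalSpace G] (T : F →L[ℝ] G) {O : Set F} {S : Set G} (hS : IsClosed S)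
    (hSc : Convex ℝ S) (hO : MapsTo T O S) : MapsTo T (closure (convexHull ℝ O)) S :=
  closure_minimal (convexHull_min hO (hSc.linear_preimage T.toLinearMap)) (hS.preimage T.continuous)

end MinimalNorm

namespace ProbabilityTheory.Kernel

variable {X E : Type*} [MeasurableSpace X] [NormedAddCommGroup E] {μ : Measure X}
  {κ : Kernel X X}

lemma lintegral_lintegral_eq_of_comp_eq (hκ : κ ∘ₘ μ = μ) {g : X → ℝ≥0∞} (hg : Measurable g) :
    ∫⁻ x, ∫⁻ y, g y ∂κ x ∂μ = ∫⁻ y, g y ∂μ := by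
  conv_rhs => rw [← hκ]
  exact (Measure.lintegral_bind κ.aemeasurable hg.aemeasurable).symm

lemma ae_memLp_of_comp_eq (hκ : κ ∘ₘ μ = μ) {p : ℝ≥0∞} (hp0 : p ≠ 0) (hp : p ≠ ∞) {v : X → E}
    (hv : StronglyMeasurable v) (hvp : MemLp v p μ) : ∀ᵐ x ∂μ, MemLp v p (κ x) := by
  lift p to ℝ≥0 using hp
  have hp0 : p ≠ 0 := by exact_mod_cast hp0
  have hfin : ∫⁻ x, ∫⁻ y, ‖v y‖ₑ ^ (p : ℝ) ∂κ x ∂μ ≠ ∞ := by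
    rw [lintegral_lintegral_eq_of_comp_eq hκ (hv.enorm.pow_const _),
      ← eLpNorm_nnreal_pow_eq_lintegral hp0]
    exact (ENNReal.rpow_lt_top_of_nonneg (by positivity) hvp.eLpNorm_ne_top).ne
  filter_upwards [ae_lt_top' (hv.enorm.pow_const _).lintegral_kernel.aemeasurable hfin] with x hx
  rw [← eLpNorm_nnreal_pow_eq_lintegral hp0] at hx
  exact ⟨hv.aestronglyMeasurable, (ENNReal.rpow_lt_top_iff_of_pos (by positivity)).1 hx⟩

lemma ae_integrable_of_comp_eq [IsMarkovKernel κ] (hκ : κ ∘ₘ μ = μ) (v : Lp E 2 μ) :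
    ∀ᵐ x ∂μ, Integrable v (κ x) :=
  (ae_memLp_of_comp_eq hκ two_ne_zero ENNReal.ofNat_ne_top (Lp.stronglyMeasurable v)
    (Lp.memLp v)).mono fun _ hx ↦ hx.integrable one_le_two

lemma apply_eq_indicator_of_ae_mem_iff [IsMarkovKernel κ] {A : Set X} (hA : MeasurableSet A)
    {x : X} (hx : ∀ᵐ y ∂κ x, y ∈ A ↔ x ∈ A) : κ x A = A.indicator (fun _ ↦ 1) x := by
  by_cases hxA : x ∈ A
  · rw [indicator_of_mem hxA, ← measure_univ (μ := κ x),
      ← ae_mem_iff_measure_eq hA.nullMeasurableSet]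
    exact hx.mono fun y hy ↦ hy.2 hxA
  · rw [indicator_of_notMem hxA, measure_eq_zero_iff_ae_notMem]
    exact hx.mono fun y hy hyA ↦ hxA (hy.1 hyA)

variable [NormedSpace ℝ E]

lemma ae_integral_congr (hκ : κ ∘ₘ μ = μ) {v w : X → E} (h : v =ᵐ[μ] w) :
    ∀ᵐ x ∂μ, ∫ y, v y ∂κ x = ∫ y, w y ∂κ x := by
  rw [← hκ] at h
  filter_upwards [Measure.ae_ae_of_ae_comp h] with x hx
  exact integral_congr_ae hx

lemma integral_integral_eq_of_comp_eq (hκ : κ ∘ₘ μ = μ) {v : X → E} (hv : Integrable v μ) :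
    ∫ x, ∫ y, v y ∂κ x ∂μ = ∫ y, v y ∂μ := by
  rw [← hκ] at hv
  conv_rhs => rw [← hκ]
  rw [Measure.comp_eq_comp_const_apply] at hv ⊢
  rw [Kernel.integral_comp hv]
  simp

variable [IsMarkovKernel κ]

lemma enorm_integral_le_eLpNorm {p : ℝ≥0∞} (hp : 1 ≤ p) {v : X → E} (hv : StronglyMeasurable v)
    (x : X) : ‖∫ y, v y ∂κ x‖ₑ ≤ eLpNorm v p (κ x) :=
  (enorm_integral_le_lintegral_enorm _).trans <| eLpNorm_one_eq_lintegral_enorm (f := v) ▸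
    eLpNorm_le_eLpNorm_of_exponent_le hp hv.aestronglyMeasurable

lemma eLpNorm_integral_le (hκ : κ ∘ₘ μ = μ) {p : ℝ≥0∞} (hp : 1 ≤ p) (hp' : p ≠ ∞) {v : X → E}
    (hv : StronglyMeasurable v) : eLpNorm (fun x ↦ ∫ y, v y ∂κ x) p μ ≤ eLpNorm v p μ := by
  lift p to ℝ≥0 using hp'
  have hp0 : p ≠ 0 := by rintro rfl; simp at hp
  rw [← ENNReal.rpow_le_rpow_iff (z := p) (by positivity), eLpNorm_nnreal_pow_eq_lintegral hp0,
    eLpNorm_nnreal_pow_eq_lintegral hp0,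
    ← lintegral_lintegral_eq_of_comp_eq hκ (hv.enorm.pow_const _)]
  refine lintegral_mono fun x ↦ ?_
  rw [← eLpNorm_nnreal_pow_eq_lintegral hp0]
  gcongr
  exact enorm_integral_le_eLpNorm hp hv x

lemma memLp_integral (hκ : κ ∘ₘ μ = μ) (v : Lp E 2 μ) : MemLp (fun x ↦ ∫ y, v y ∂κ x) 2 μ :=
  ⟨(Lp.stronglyMeasurable v).integral_kernel.aestronglyMeasurable,
    (eLpNorm_integral_le hκ one_le_two ENNReal.ofNat_ne_top (Lp.stronglyMeasurable v)).trans_lt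
      (Lp.eLpNorm_lt_top v)⟩

lemma toLp_integral_add (hκ : κ ∘ₘ μ = μ) (v w : Lp E 2 μ) :
    (memLp_integral hκ (v + w)).toLp =
      (memLp_integral hκ v).toLp + (memLp_integral hκ w).toLp := by
  refine Lp.ext ?_
  filter_upwards [MemLp.coeFn_toLp (memLp_integral hκ (v + w)),
    Lp.coeFn_add (memLp_integral hκ v).toLp (memLp_integral hκ w).toLp,
    MemLp.coeFn_toLp (memLp_integral hκ v), MemLp.coeFn_toLp (memLp_integral hκ w),
    ae_integral_congr hκ (Lp.coeFn_add v w), ae_integrable_of_comp_eq hκ v,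
    ae_integrable_of_comp_eq hκ w]
    with x h₁ h₂ h₃ h₄ h₅ hv hw
  rw [h₁, h₂, Pi.add_apply, h₃, h₄, h₅]
  exact integral_add hv hw

lemma toLp_integral_smul (hκ : κ ∘ₘ μ = μ) (c : ℝ) (v : Lp E 2 μ) :
    (memLp_integral hκ (c • v)).toLp = c • (memLp_integral hκ v).toLp := by
  refine Lp.ext ?_
  filter_upwards [MemLp.coeFn_toLp (memLp_integral hκ (c • v)),
    Lp.coeFn_smul c (memLp_integral hκ v).toLp,
    MemLp.coeFn_toLp (memLp_integral hκ v), ae_integral_congr hκ (Lp.coeFn_smul c v)]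
    with x h₁ h₂ h₃ h₄
  rw [h₁, h₂, Pi.smul_apply, h₃, h₄]
  exact integral_smul c _

lemma norm_toLp_integral_le (hκ : κ ∘ₘ μ = μ) (v : Lp E 2 μ) :
    ‖(memLp_integral hκ v).toLp‖ ≤ ‖v‖ := by
  rw [Lp.norm_toLp, Lp.norm_def]
  exact ENNReal.toReal_mono (Lp.eLpNorm_ne_top v)
    (eLpNorm_integral_le hκ one_le_two ENNReal.ofNat_ne_top (Lp.stronglyMeasurable v))

variable (κ) in
noncomputable def markovOperator (hκ : κ ∘ₘ μ = μ) : Lp E 2 μ →L[ℝ] Lp E 2 μ :=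
  LinearMap.mkContinuous
    { toFun v := (memLp_integral hκ v).toLp
      map_add' := toLp_integral_add hκ
      map_smul' := toLp_integral_smul hκ }
    1 fun v ↦ (one_mul ‖v‖).symm ▸ norm_toLp_integral_le hκ v

lemma coeFn_markovOperator (hκ : κ ∘ₘ μ = μ) (v : Lp E 2 μ) :
    markovOperator κ hκ v =ᵐ[μ] fun x ↦ ∫ y, v y ∂κ x :=
  MemLp.coeFn_toLp (memLp_integral hκ v)

lemma norm_markovOperator_apply_le (hκ : κ ∘ₘ μ = μ) (v : Lp E 2 μ) :
    ‖markovOperator κ hκ v‖ ≤ ‖v‖ :=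
  norm_toLp_integral_le hκ v

lemma markovOperator_eq_comp {η ζ : Kernel X X} [IsMarkovKernel η] [IsMarkovKernel ζ]
    (h : ζ = η ∘ₖ κ) (hκ : κ ∘ₘ μ = μ) (hη : η ∘ₘ μ = μ) (hζ : ζ ∘ₘ μ = μ) :
    markovOperator ζ hζ = (markovOperator κ hκ).comp (markovOperator η hη (E := E)) := by
  subst h
  ext1 v
  refine Lp.ext ?_
  filter_upwards [coeFn_markovOperator hζ v, coeFn_markovOperator hκ (markovOperator η hη v),
    ae_integral_congr hκ (coeFn_markovOperator hη v), ae_integrable_of_comp_eq hζ v]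
    with x h₁ h₂ h₃ hv
  rw [ContinuousLinearMap.comp_apply, h₁, h₂, h₃, Kernel.integral_comp hv]

lemma inner_compMeasurePreserving_fst_snd [SFinite μ] (hκ : κ ∘ₘ μ = μ)
    (hfst : MeasurePreserving Prod.fst (μ ⊗ₘ κ) μ)
    (hsnd : MeasurePreserving Prod.snd (μ ⊗ₘ κ) μ) (u v : Lp ℝ 2 μ) :
    inner ℝ (Lp.compMeasurePreserving Prod.fst hfst u) (Lp.compMeasurePreserving Prod.snd hsnd v) =
      inner ℝ u (markovOperator κ hκ v) := by
  have hprod : (fun p : X × X ↦ inner ℝ (Lp.compMeasurePreserving Prod.fst hfst u p)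
      (Lp.compMeasurePreserving Prod.snd hsnd v p)) =ᵐ[μ ⊗ₘ κ] fun p ↦ u p.1 * v p.2 := by
    filter_upwards [Lp.coeFn_compMeasurePreserving u hfst,
      Lp.coeFn_compMeasurePreserving v hsnd] with p h₁ h₂
    rw [h₁, h₂, RCLike.inner_apply', conj_trivial, Function.comp_apply, Function.comp_apply]
  rw [L2.inner_def, L2.inner_def, integral_congr_ae hprod,
    Measure.integral_compProd ((L2.integrable_inner _ _).congr hprod)]
  refine integral_congr_ae ?_
  filter_upwards [coeFn_markovOperator hκ v] with x hx
  rw [hx, RCLike.inner_apply', conj_trivial, ← integral_const_mul]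

lemma ae_ae_eq_of_markovOperator_eq [SFinite μ] (hκ : κ ∘ₘ μ = μ) {h : Lp ℝ 2 μ}
    (hfix : markovOperator κ hκ h = h) : ∀ᵐ x ∂μ, ∀ᵐ y ∂κ x, h y = h x := by
  have hfst : MeasurePreserving Prod.fst (μ ⊗ₘ κ) μ := ⟨measurable_fst, Measure.fst_compProd μ κ⟩
  have hsnd : MeasurePreserving Prod.snd (μ ⊗ₘ κ) μ :=
    ⟨measurable_snd, (Measure.snd_compProd μ κ).trans hκ⟩
  have heq : Lp.compMeasurePreserving Prod.snd hsnd h =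
      Lp.compMeasurePreserving Prod.fst hfst h := by
    have hinner := inner_compMeasurePreserving_fst_snd hκ hfst hsnd h h
    rw [hfix, real_inner_self_eq_norm_sq] at hinner
    rw [← sub_eq_zero, ← norm_eq_zero, ← sq_eq_zero_iff (M₀ := ℝ), norm_sub_sq_real,
      real_inner_comm, hinner, Lp.norm_compMeasurePreserving, Lp.norm_compMeasurePreserving]
    ring
  have hae := (Lp.coeFn_compMeasurePreserving h hsnd).symm.trans
    (heq ▸ Lp.coeFn_compMeasurePreserving h hfst)
  exact Measure.ae_ae_of_ae_compProd hae

end ProbabilityTheory.Kernel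

section Ergodic

variable {X M : Type*} [MeasurableSpace X] {μ : Measure X} [IsProbabilityMeasure μ]
  {P : M → Kernel X X} [∀ t, IsMarkovKernel (P t)]

lemma ae_eq_const_of_ae_ae_eq
    (herg : ∀ A : Set X, MeasurableSet A →
      (∀ t, ∀ᵐ x ∂μ, (P t) x A = A.indicator (fun _ => (1 : ℝ≥0∞)) x) →
      μ A = 0 ∨ μ A = 1)
    {h : X → ℝ} (hh : Measurable h) (hinv : ∀ t, ∀ᵐ x ∂μ, ∀ᵐ y ∂P t x, h y = h x) :
    ∃ c, h =ᵐ[μ] fun _ ↦ c := by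
  refine exists_eventuallyEq_const_of_forall_separating MeasurableSet fun U hU ↦ ?_
  have hA : MeasurableSet (h ⁻¹' U) := hh hU
  refine (herg _ hA fun t ↦ (hinv t).mono fun x hx ↦ ?_).symm.imp (fun h1 ↦ ?_) fun h0 ↦ ?_
  · exact Kernel.apply_eq_indicator_of_ae_mem_iff hA (hx.mono fun y hy ↦ by simp [hy])
  · exact mem_ae_iff.2 ((prob_compl_eq_zero_iff hA).2 h1)
  · exact measure_eq_zero_iff_ae_notMem.1 h0

lemma setIntegral_mem_of_mem_closure_convexHull {A : Set X} (hA : MeasurableSet A)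
    {O : Set (Lp ℝ 2 μ)} {S : Set ℝ} (hS : IsClosed S) (hSc : Convex ℝ S)
    (hO : ∀ v ∈ O, ∫ x in A, v x ∂μ ∈ S) {h : Lp ℝ 2 μ} (hh : h ∈ closure (convexHull ℝ O)) :
    ∫ x in A, h x ∂μ ∈ S := by
  simp_rw [← L2.inner_indicatorConstLp_one hA (measure_ne_top μ A)] at hO ⊢
  exact (innerSL ℝ _).mapsTo_closure_convexHull hS hSc hO hh

theorem integral_le_of_ae_integral_le [Add M] [Nonempty M]
    (hsem : ∀ s t : M, P (s + t) = (P t).comp (P s)) (hinv : ∀ t, P t ∘ₘ μ = μ)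
    (herg : ∀ A : Set X, MeasurableSet A →
      (∀ t, ∀ᵐ x ∂μ, (P t) x A = A.indicator (fun _ => (1 : ℝ≥0∞)) x) →
      μ A = 0 ∨ μ A = 1)
    {g : X → ℝ} (hg : MemLp g 2 μ) {B : Set X} (hB : MeasurableSet B) (hBpos : 0 < μ B) {m : ℝ}
    (hgB : ∀ t, ∀ᵐ x ∂μ, x ∈ B → ∫ y, g y ∂P t x ≤ m) : ∫ x, g x ∂μ ≤ m := by
  set T : M → Lp ℝ 2 μ →L[ℝ] Lp ℝ 2 μ := fun t ↦ Kernel.markovOperator (P t) (hinv t)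
  set O := range fun t ↦ T t (hg.toLp g)
  have hTO (s : M) : MapsTo (T s) O (closure (convexHull ℝ O)) := by
    rintro _ ⟨t, rfl⟩
    refine subset_closure (subset_convexHull ℝ O ⟨s + t, ?_⟩)
    simp only [T, Kernel.markovOperator_eq_comp (hsem s t) (hinv s) (hinv t)]
    rfl
  obtain ⟨h, hhO, hfix⟩ := isClosed_closure.exists_isFixedPt_of_norm_le
    (convex_convexHull ℝ O).closure
    ((range_nonempty _).mono (subset_convexHull ℝ O |>.trans subset_closure))
    (fun s ↦ (T s).mapsTo_closure_convexHull isClosed_closure (convex_convexHull ℝ O).closure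
      (hTO s))
    (fun s ↦ Kernel.norm_markovOperator_apply_le (hinv s))
  obtain ⟨c, hc⟩ := ae_eq_const_of_ae_ae_eq herg (Lp.stronglyMeasurable h).measurable
    fun t ↦ Kernel.ae_ae_eq_of_markovOperator_eq (hinv t) (hfix t)
  have hTg (t : M) : T t (hg.toLp g) =ᵐ[μ] fun x ↦ ∫ y, g y ∂P t x :=
    (Kernel.coeFn_markovOperator (hinv t) _).trans (Kernel.ae_integral_congr (hinv t) hg.coeFn_toLp)
  have hmem {A : Set X} (hA : MeasurableSet A) {S : Set ℝ} (hS : IsClosed S) (hSc : Convex ℝ S)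
      (hO : ∀ t, ∫ x in A, ∫ y, g y ∂P t x ∂μ ∈ S) : μ.real A * c ∈ S := by
    have := setIntegral_mem_of_mem_closure_convexHull hA hS hSc (by
      rintro _ ⟨t, rfl⟩
      exact setIntegral_congr_ae hA ((hTg t).mono fun x hx _ ↦ hx) ▸ hO t) hhO
    rwa [setIntegral_congr_ae hA (hc.mono fun x hx _ ↦ hx), setIntegral_const, smul_eq_mul] at this
  have hgc : ∫ x, g x ∂μ = c := by
    have := hmem MeasurableSet.univ isClosed_singleton (convex_singleton (∫ x, g x ∂μ)) fun t ↦ by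
      rw [Measure.restrict_univ,
        Kernel.integral_integral_eq_of_comp_eq (hinv t) (hg.integrable one_le_two)]
      rfl
    simpa using this.symm
  have hcm : μ.real B * c ≤ μ.real B * m := hmem hB isClosed_Iic (convex_Iic _) fun t ↦ by
    have hint := ((Lp.memLp (T t (hg.toLp g))).integrable one_le_two).congr (hTg t)
    refine (setIntegral_mono_ae_restrict hint.integrableOn
      (integrableOn_const (measure_ne_top μ B)) ((ae_restrict_iff' hB).2 (hgB t))).trans_eq ?_
    rw [setIntegral_const, smul_eq_mul]
  exact hgc ▸ le_of_mul_le_mul_left hcm (ENNReal.toReal_pos hBpos.ne' (measure_ne_top μ B))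

end Ergodic

section Integrability

variable {X : Type*} [MeasurableSpace X] {μ : Measure X} {f : X → ℝ}

lemma memLp_min_abs [IsFiniteMeasure μ] (hf : Measurable f) (p : ℝ≥0∞) (K : ℕ) :
    MemLp (fun x ↦ min |f x| K) p μ :=
  MemLp.of_bound (hf.abs.min measurable_const).aestronglyMeasurable K <| ae_of_all _ fun x ↦ by
    rw [Real.norm_of_nonneg (by positivity)]
    exact min_le_right _ _

lemma integral_min_abs_le (hf : Measurable f) (K : ℕ) {C : ℝ} (hC : 0 ≤ C)
    (h : ∫⁻ x, ENNReal.ofReal |f x| ∂μ ≤ ENNReal.ofReal C) : ∫ x, min |f x| K ∂μ ≤ C := by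
  rw [integral_eq_lintegral_of_nonneg_ae (ae_of_all _ fun x ↦ by positivity)
    (hf.abs.min measurable_const).aestronglyMeasurable]
  exact ENNReal.toReal_le_of_le_ofReal hC <|
    (lintegral_mono fun x ↦ ENNReal.ofReal_le_ofReal (min_le_left _ _)).trans h

lemma integrable_of_forall_integral_min_abs_le [IsFiniteMeasure μ] (hf : Measurable f) {C : ℝ}
    (h : ∀ K : ℕ, ∫ x, min |f x| K ∂μ ≤ C) : Integrable f μ := by
  have hsup (x : X) : ⨆ K : ℕ, ENNReal.ofReal (min |f x| K) = ‖f x‖ₑ := by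
    obtain ⟨K, hK⟩ := exists_nat_ge |f x|
    refine le_antisymm (iSup_le fun K ↦ ?_) (le_iSup_of_le K ?_) <;>
      rw [Real.enorm_eq_ofReal_abs]
    · exact ENNReal.ofReal_le_ofReal (min_le_left _ _)
    · rw [min_eq_left hK]
  have hmono : Monotone fun (K : ℕ) (x : X) ↦ ENNReal.ofReal (min |f x| K) :=
    fun K L hKL x ↦ ENNReal.ofReal_le_ofReal (min_le_min_left _ (Nat.cast_le.2 hKL))
  refine ⟨hf.aestronglyMeasurable, ?_⟩
  rw [HasFiniteIntegral, ← lintegral_congr hsup,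
    lintegral_iSup (fun K ↦ (hf.abs.min measurable_const).ennreal_ofReal) hmono]
  refine (iSup_le fun K ↦ ?_).trans_lt (ENNReal.ofReal_lt_top (r := C))
  rw [← ofReal_integral_eq_lintegral_ofReal ((memLp_min_abs hf 1 K).integrable le_rfl)
    (ae_of_all _ fun x ↦ by positivity)]
  exact ENNReal.ofReal_le_ofReal (h K)

lemma exists_measurableSet_forall_ae_le [IsFiniteMeasure μ] {ι : Type*} {G : ι → X → ℝ≥0∞}
    (hG : ∀ i, Measurable (G i)) {S : Set X} (hS : 0 < μ S) (hbd : ∀ x ∈ S, ⨆ i, G i x < ⊤) :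
    ∃ n : ℕ, ∃ B, MeasurableSet B ∧ 0 < μ B ∧ ∀ i, ∀ᵐ x ∂μ, x ∈ B → G i x ≤ n := by
  set S' : ℕ → Set X := fun n ↦ {x ∈ S | ∀ i, G i x ≤ n}
  have hcover : S ⊆ ⋃ n, S' n := fun x hx ↦ by
    obtain ⟨n, hn⟩ := ENNReal.exists_nat_gt (hbd x hx).ne
    exact mem_iUnion.2 ⟨n, hx, fun i ↦ (le_iSup (G · x) i).trans hn.le⟩
  obtain ⟨n, hn⟩ : ∃ n, μ (S' n) ≠ 0 := by
    by_contra! h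
    exact hS.ne' (measure_mono_null hcover (measure_iUnion_null h))
  -- `S' n` is an uncountable intersection and need not be measurable.
  refine ⟨n, toMeasurable μ (S' n), measurableSet_toMeasurable _ _,
    by rwa [measure_toMeasurable, pos_iff_ne_zero], fun i ↦ ?_⟩
  have hbad : μ (toMeasurable μ (S' n) ∩ {x | (n : ℝ≥0∞) < G i x}) = 0 := by
    rw [Measure.measure_toMeasurable_inter (measurableSet_lt measurable_const (hG i))
      (measure_ne_top _ _)]
    exact measure_mono_null (fun x hx ↦ (hx.2.not_ge (hx.1.2 i)).elim) measure_empty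
  rw [ae_iff]
  refine measure_mono_null (fun x hx ↦ ?_) hbad
  simp only [mem_ofPred_eq, Classical.not_imp, not_le] at hx
  exact hx

end Integrability

theorem stmt6_general {X : Type*} [MeasurableSpace X]
    (P : ℝ≥0 → Kernel X X) [∀ t, IsMarkovKernel (P t)]
    (hsem : ∀ s t : ℝ≥0, P (s + t) = (P t).comp (P s))
    (μ : Measure X) [IsProbabilityMeasure μ]
    (hinv : ∀ t, μ.bind (fun x => P t x) = μ)
    (herg : ∀ A : Set X, MeasurableSet A →
      (∀ t, ∀ᵐ x ∂μ, (P t) x A = A.indicator (fun _ => (1 : ℝ≥0∞)) x) →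
      μ A = 0 ∨ μ A = 1)
    (f : X → ℝ) (hf : Measurable f)
    (Xbar : Set X) (hpos : 0 < μ Xbar)
    (hbound : ∀ x ∈ Xbar, (⨆ t : ℝ≥0, ∫⁻ y, ENNReal.ofReal |f y| ∂((P t) x)) < ⊤) :
    Integrable f μ := by
  obtain ⟨n, B, hB, hBpos, hBn⟩ :=
    exists_measurableSet_forall_ae_le (fun t ↦ hf.abs.ennreal_ofReal.lintegral_kernel) hpos hbound
  refine integrable_of_forall_integral_min_abs_le hf (C := n) fun K ↦
    integral_le_of_ae_integral_le hsem hinv herg (memLp_min_abs hf 2 K) hB hBpos fun t ↦ ?_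
  filter_upwards [hBn t] with x hx hxB
  exact integral_min_abs_le hf K n.cast_nonneg ((hx hxB).trans_eq (ENNReal.ofReal_natCast n).symm)

theorem stmt6 {X : Type*} [MeasurableSpace X]
    (P : ℝ≥0 → Kernel X X) [∀ t, IsMarkovKernel (P t)]
    (hsem : ∀ s t : ℝ≥0, P (s + t) = (P t).comp (P s))
    (μ : Measure X) [IsProbabilityMeasure μ]
    (hinv : ∀ t, μ.bind (fun x => P t x) = μ)
    (herg : ∀ A : Set X, MeasurableSet A →
      (∀ t, ∀ᵐ x ∂μ, (P t) x A = A.indicator (fun _ => (1 : ℝ≥0∞)) x) →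
      μ A = 0 ∨ μ A = 1)
    (f : X → ℝ) (hf : Measurable f)
    (Xbar : Set X) (hXbar : MeasurableSet Xbar) (hpos : 0 < μ Xbar)
    (hbound : ∀ x ∈ Xbar, (⨆ t : ℝ≥0, ∫⁻ y, ENNReal.ofReal |f y| ∂((P t) x)) < ⊤) :
    Integrable f μ :=
  stmt6_general P hsem μ hinv herg f hf Xbar hpos hbound
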